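/- Assume conditions (V), (AV1) and (AV2) hold. Then inf_{x ∈ X} I(x) = 0; more precisely I(x) > 0 for every x ∈ X, and for any sequence of constant paths x_n(t) ≡ ξ_n ∈ ℝ³ with |ξ_n| → +∞ one has I(x_n) = Φ(x_n) → 0. -/

import Mathlib

open Filter Topology Set MeasureTheory Function
open scoped ENNReal NNReal

noncomputable section

namespace LFE

/-- `ℝ³` with the Euclidean norm. -/
abbrev E3 : Type := EuclideanSpace ℝ (Fin 3)

def toFn (u : E3) : Fin 3 → ℝ := (WithLp.equiv 2 (Fin 3 → ℝ)) u

def fromFn (f : Fin 3 → ℝ) : E3 := (WithLp.equiv 2 (Fin 3 → ℝ)).symm f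

/-- Euclidean inner product on `ℝ³`. -/
def dot (u v : E3) : ℝ := ∑ i, toFn u i * toFn v i

/-- Cross product on `ℝ³`. -/
def cross (u v : E3) : E3 :=
  fromFn ![toFn u 1 * toFn v 2 - toFn u 2 * toFn v 1,
           toFn u 2 * toFn v 0 - toFn u 0 * toFn v 2,
           toFn u 0 * toFn v 1 - toFn u 1 * toFn v 0]

/-- Partial derivative `∂ᵢ Fⱼ` of a vector field on `ℝ³`. -/
def pd (F : E3 → E3) (x : E3) (i j : Fin 3) : ℝ :=
  toFn (fderiv ℝ F x (EuclideanSpace.single i 1)) j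

/-- Curl of a vector field on `ℝ³`. -/
def curl (F : E3 → E3) (x : E3) : E3 :=
  fromFn ![pd F x 1 2 - pd F x 2 1, pd F x 2 0 - pd F x 0 2, pd F x 0 1 - pd F x 1 0]

/-- Transpose of the Jacobian of `F` at `x`, applied to the vector `v`. -/
def jacT (F : E3 → E3) (x v : E3) : E3 :=
  fromFn fun i => dot (fderiv ℝ F x (EuclideanSpace.single i 1)) v

/-- The open set `Ω = {(t,x) : x ≠ rⱼ(t) for all j}`. -/
def Omega (N : ℕ) (r : Fin N → ℝ → E3) : Set (ℝ × E3) := {p | ∀ i, p.2 ≠ r i p.1}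

/-- The basic setting: `T`-periodic `C¹` curves of singularities `r i`, moving slower than
light and never colliding, together with `C¹`, `T`-periodic (in time) potentials `V`, `A`
defined on `Ω`. -/
structure Setting (T c : ℝ) (N : ℕ) where
  r : Fin N → ℝ → E3
  V : ℝ → E3 → ℝ
  A : ℝ → E3 → E3
  hT : 0 < T
  hc : 0 < c
  hr_per : ∀ i, Periodic (r i) T
  hr_C1 : ∀ i, ContDiff ℝ 1 (r i)
  hr_speed : ∀ i, ∃ b, b < c ∧ ∀ t, ‖deriv (r i) t‖ ≤ b
  hr_sep : ∀ i j, i ≠ j → ∀ t ∈ Icc (0:ℝ) T, r i t ≠ r j t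
  hV_per : ∀ t x, V (t + T) x = V t x
  hA_per : ∀ t x, A (t + T) x = A t x
  hV_C1 : ContDiffOn ℝ 1 (fun p : ℝ × E3 => V p.1 p.2) (Omega N r)
  hA_C1 : ContDiffOn ℝ 1 (fun p : ℝ × E3 => A p.1 p.2) (Omega N r)

variable {T c : ℝ} {N : ℕ}

/-- Condition (V): `V < 0` on `Ω` and `V` has a Keplerian blow-up at the singularities. -/
def CondV (S : Setting T c N) : Prop :=
  (∀ p ∈ Omega N S.r, S.V p.1 p.2 < 0) ∧
  ∃ κ > (0:ℝ), ∃ δ > (0:ℝ), ∀ i, ∀ p ∈ Omega N S.r,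
    ‖p.2 - S.r i p.1‖ < δ → S.V p.1 p.2 ≤ -κ / ‖p.2 - S.r i p.1‖

/-- Condition (AV1): `|A| ≤ -(κ'/c) V` on `Ω` for some `κ' ∈ (0,1)`. -/
def CondAV1 (S : Setting T c N) : Prop :=
  ∃ κ' : ℝ, 0 < κ' ∧ κ' < 1 ∧ ∀ p ∈ Omega N S.r, ‖S.A p.1 p.2‖ ≤ -(κ' / c) * S.V p.1 p.2

/-- Condition (AV2): `|V| + |∇ₓV + ∂ₜA| + |curlₓ A| → 0` as `|x| → ∞`, uniformly in `t`. -/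
def CondAV2 (S : Setting T c N) : Prop :=
  ∀ ε > (0:ℝ), ∃ R : ℝ, ∀ p ∈ Omega N S.r, R < ‖p.2‖ →
    |S.V p.1 p.2| + ‖gradient (S.V p.1) p.2 + deriv (fun s => S.A s p.2) p.1‖
      + ‖curl (S.A p.1) p.2‖ < ε

/-- `x` is a classical `T`-periodic solution of the Lorentz force equation
`d/dt (ẋ/√(1-|ẋ|²/c²)) = E(t,x) + ẋ × B(t,x)`, with
`E = -∇ₓV - ∂ₜA` and `B = curlₓ A`, avoiding the singularities. -/
def IsSolution (S : Setting T c N) (x : ℝ → E3) : Prop :=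
  Periodic x T ∧ ContDiff ℝ 1 x ∧ (∀ t, (t, x t) ∈ Omega N S.r) ∧
  (∀ t, ‖deriv x t‖ < c) ∧
  ∀ t : ℝ, HasDerivAt (fun s => (Real.sqrt (1 - ‖deriv x s‖ ^ 2 / c ^ 2))⁻¹ • deriv x s)
    (-(gradient (S.V t) (x t)) - deriv (fun s => S.A s (x t)) t
      + cross (deriv x t) (curl (S.A t) (x t))) t

/-- Membership in `X = {x ∈ W^{1,∞}(0,T;ℝ³) : x(0) = x(T)}`, identified with the space of
`T`-periodic Lipschitz paths. -/
def MemX (T : ℝ) (x : ℝ → E3) : Prop := Periodic x T ∧ ∃ K : ℝ≥0, LipschitzWith K x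

/-- `‖x‖_∞` on `[0,T]`. -/
def supN (T : ℝ) (x : ℝ → E3) : ℝ := sSup ((fun t => ‖x t‖) '' Icc 0 T)

/-- `‖ẋ‖_∞` (essential supremum on `[0,T]`). -/
def derN (T : ℝ) (x : ℝ → E3) : ℝ := (eLpNorm (deriv x) ⊤ (volume.restrict (Icc 0 T))).toReal

/-- The norm of `X`: `‖x‖ = ‖x‖_∞ + ‖ẋ‖_∞`. -/
def Xnorm (T : ℝ) (x : ℝ → E3) : ℝ := supN T x + derN T x

/-- Distance induced by the norm of `X`. -/
def Xdist (T : ℝ) (x y : ℝ → E3) : ℝ := Xnorm T (fun t => x t - y t)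

/-- `D_ψ = {x ∈ X : ‖ẋ‖_∞ ≤ c}`, i.e. `x` is `c`-Lipschitz. -/
def MemDpsi (T c : ℝ) (x : ℝ → E3) : Prop := MemX T x ∧ LipschitzWith (Real.toNNReal c) x

/-- The (finite part of the) kinetic functional `ψ`. -/
def psiVal (T c : ℝ) (x : ℝ → E3) : ℝ :=
  ∫ t in (0:ℝ)..T, c ^ 2 * (1 - Real.sqrt (1 - ‖deriv x t‖ ^ 2 / c ^ 2))

open Classical in
/-- The extended-real-valued functional `ψ`. -/
def psiE (T c : ℝ) (x : ℝ → E3) : EReal :=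
  if MemDpsi T c x then (psiVal T c x : EReal) else ⊤

/-- `Λ = {x ∈ X : (t, x(t)) ∈ Ω for all t ∈ [0,T]}`. -/
def MemLambda (T : ℝ) {N : ℕ} (r : Fin N → ℝ → E3) (x : ℝ → E3) : Prop :=
  MemX T x ∧ ∀ t ∈ Icc (0:ℝ) T, (t, x t) ∈ Omega N r

/-- The (finite part of the) potential functional `Φ`. -/
def phiVal (T : ℝ) (V : ℝ → E3 → ℝ) (A : ℝ → E3 → E3) (x : ℝ → E3) : ℝ :=
  ∫ t in (0:ℝ)..T, (-(V t (x t)) + dot (A t (x t)) (deriv x t))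

open Classical in
/-- The extended-real-valued functional `Φ`. -/
def phiE (T : ℝ) {N : ℕ} (r : Fin N → ℝ → E3) (V : ℝ → E3 → ℝ) (A : ℝ → E3 → E3)
    (x : ℝ → E3) : EReal :=
  if MemLambda T r x then (phiVal T V A x : EReal) else ⊤

/-- The action functional `I = ψ + Φ`. -/
def IE (T c : ℝ) {N : ℕ} (r : Fin N → ℝ → E3) (V : ℝ → E3 → ℝ) (A : ℝ → E3 → E3)
    (x : ℝ → E3) : EReal :=
  psiE T c x + phiE T r V A x

/-- The differential of `Φ` at `x ∈ Λ` in the direction `y`. -/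
def dPhi (T : ℝ) (V : ℝ → E3 → ℝ) (A : ℝ → E3 → E3) (x y : ℝ → E3) : ℝ :=
  ∫ t in (0:ℝ)..T,
    (-(dot (gradient (V t) (x t)) (y t)) + dot (A t (x t)) (deriv y t)
      + dot (jacT (A t) (x t) (deriv x t)) (y t))

end LFE

/-!
Along a constant path the kinetic term vanishes and only `∫ -V(t, ξ) dt` is left, which tends
to `0` as `|ξ| → ∞` by (AV2). Conversely, on `D_ψ` the speed is at most `c`, so by (AV1)
`|A · ẋ| ≤ κ' |V| < -V` and the integrand of `Φ` is positive; off `D_ψ ∩ Λ` the action is `+∞`.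
-/

open scoped Interval InnerProductSpace

section

variable {F : Type*} [NormedAddCommGroup F] [InnerProductSpace ℝ F]

theorem neg_add_inner_pos {κ c v : ℝ} {a w : F} (hc : 0 < c) (hκ : κ < 1) (hv : v < 0)
    (ha : ‖a‖ ≤ -(κ / c) * v) (hw : ‖w‖ ≤ c) : 0 < -v + ⟪a, w⟫_ℝ := by
  have hinner : |⟪a, w⟫_ℝ| ≤ -κ * v :=
    calc |⟪a, w⟫_ℝ| ≤ ‖a‖ * ‖w‖ := abs_real_inner_le_norm a w
      _ ≤ -(κ / c) * v * c := mul_le_mul ha hw (norm_nonneg w) ((norm_nonneg a).trans ha)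
      _ = -κ * v := by field_simp
  have hκv : -κ * v < -v := by nlinarith
  linarith [neg_abs_le ⟪a, w⟫_ℝ]

theorem intervalIntegrable_inner_deriv [CompleteSpace F] {g x : ℝ → F} {a b : ℝ} {K : ℝ≥0}
    (hg : ContinuousOn g [[a, b]]) (hx : LipschitzWith K x) :
    IntervalIntegrable (fun t => ⟪g t, deriv x t⟫_ℝ) volume a b := by
  obtain ⟨C, hC⟩ := isCompact_uIcc.exists_bound_of_continuousOn hg
  refine (intervalIntegrable_const (c := C * K)).mono_fun' ?_ ?_
  · exact ((hg.mono uIoc_subset_uIcc).aestronglyMeasurable measurableSet_uIoc).inner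
      (stronglyMeasurable_deriv x).aestronglyMeasurable
  · refine (ae_restrict_iff' measurableSet_uIoc).2 (ae_of_all _ fun t ht => ?_)
    calc ‖⟪g t, deriv x t⟫_ℝ‖ ≤ ‖g t‖ * ‖deriv x t‖ := norm_inner_le_norm _ _
      _ ≤ C * K := mul_le_mul (hC t (uIoc_subset_uIcc ht)) (norm_deriv_le_of_lipschitz hx)
          (norm_nonneg _) ((norm_nonneg _).trans (hC t (uIoc_subset_uIcc ht)))

end

namespace LFE

theorem dot_eq_inner (u v : E3) : dot u v = ⟪u, v⟫_ℝ := by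
  simp [dot, toFn, PiLp.inner_apply, RCLike.inner_apply, mul_comm]

variable {T c : ℝ} {N : ℕ}

theorem memX_const (ξ : E3) : MemX T (fun _ => ξ) :=
  ⟨fun _ => rfl, 0, LipschitzWith.const ξ⟩

theorem psiE_const (ξ : E3) : psiE T c (fun _ => ξ) = 0 := by
  have hD : MemDpsi T c (fun _ => ξ) := ⟨memX_const ξ, (LipschitzWith.const ξ).weaken zero_le⟩
  simp [psiE, if_pos hD, psiVal]

theorem psiVal_nonneg (hT : 0 ≤ T) (x : ℝ → E3) : 0 ≤ psiVal T c x := by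
  refine intervalIntegral.integral_nonneg hT fun t _ => ?_
  have hsqrt : Real.sqrt (1 - ‖deriv x t‖ ^ 2 / c ^ 2) ≤ 1 :=
    Real.sqrt_le_one.2 (by linarith [div_nonneg (sq_nonneg ‖deriv x t‖) (sq_nonneg c)])
  nlinarith [sq_nonneg c]

theorem Setting.continuousOn_V (S : Setting T c N) {x : ℝ → E3} {s : Set ℝ} (hx : Continuous x)
    (hΩ : ∀ t ∈ s, (t, x t) ∈ Omega N S.r) : ContinuousOn (fun t => S.V t (x t)) s :=
  S.hV_C1.continuousOn.comp (continuous_id.prodMk hx).continuousOn hΩ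

theorem Setting.continuousOn_A (S : Setting T c N) {x : ℝ → E3} {s : Set ℝ} (hx : Continuous x)
    (hΩ : ∀ t ∈ s, (t, x t) ∈ Omega N S.r) : ContinuousOn (fun t => S.A t (x t)) s :=
  S.hA_C1.continuousOn.comp (continuous_id.prodMk hx).continuousOn hΩ

theorem Setting.phiVal_pos (S : Setting T c N) (hV : ∀ p ∈ Omega N S.r, S.V p.1 p.2 < 0)
    (hAV1 : CondAV1 S) {x : ℝ → E3} (hD : MemDpsi T c x) (hL : MemLambda T S.r x) :
    0 < phiVal T S.V S.A x := by
  obtain ⟨κ', -, hκ', hA⟩ := hAV1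
  have hx : Continuous x := hD.2.continuous
  have hΩ : ∀ t ∈ [[0, T]], (t, x t) ∈ Omega N S.r := by
    rw [uIcc_of_le S.hT.le]; exact hL.2
  have hint : IntervalIntegrable (fun t => -S.V t (x t) + dot (S.A t (x t)) (deriv x t))
      volume 0 T := by
    simp only [dot_eq_inner]
    exact ((S.continuousOn_V hx hΩ).neg.intervalIntegrable).add
      (intervalIntegrable_inner_deriv (S.continuousOn_A hx hΩ) hD.2)
  refine intervalIntegral.intervalIntegral_pos_of_pos_on hint (fun t ht => ?_) S.hT
  have hΩt := hL.2 t (Ioo_subset_Icc_self ht)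
  have hVt : S.V t (x t) < 0 := hV (t, x t) hΩt
  have hAt : ‖S.A t (x t)‖ ≤ -(κ' / c) * S.V t (x t) := hA (t, x t) hΩt
  have hderiv : ‖deriv x t‖ ≤ c := by
    simpa [Real.coe_toNNReal c S.hc.le] using norm_deriv_le_of_lipschitz (x₀ := t) hD.2
  rw [dot_eq_inner]
  exact neg_add_inner_pos S.hc hκ' hVt hAt hderiv

theorem Setting.IE_pos (S : Setting T c N) (hV : ∀ p ∈ Omega N S.r, S.V p.1 p.2 < 0)
    (hAV1 : CondAV1 S) (x : ℝ → E3) : 0 < IE T c S.r S.V S.A x := by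
  by_cases hD : MemDpsi T c x
  · by_cases hL : MemLambda T S.r x
    · rw [IE, psiE, phiE, if_pos hD, if_pos hL, ← EReal.coe_add, EReal.coe_pos]
      linarith [psiVal_nonneg (c := c) S.hT.le x, S.phiVal_pos hV hAV1 hD hL]
    · rw [IE, psiE, phiE, if_pos hD, if_neg hL, EReal.coe_add_top]
      exact EReal.zero_lt_top
  · have hphi : phiE T S.r S.V S.A x ≠ ⊥ := by
      unfold phiE; split_ifs <;> simp
    rw [IE, psiE, if_neg hD, EReal.top_add_of_ne_bot hphi]
    exact EReal.zero_lt_top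

theorem Setting.exists_mem_Omega_of_lt_norm (S : Setting T c N) :
    ∃ R : ℝ, ∀ ξ : E3, R < ‖ξ‖ → ∀ t ∈ Icc (0 : ℝ) T, (t, ξ) ∈ Omega N S.r := by
  have hK : IsCompact (⋃ i, S.r i '' Icc (0 : ℝ) T) :=
    isCompact_iUnion fun i => isCompact_Icc.image (S.hr_C1 i).continuous
  obtain ⟨R, hR⟩ := hK.isBounded.subset_closedBall 0
  refine ⟨R, fun ξ hξ t ht i hξi => hξ.not_ge ?_⟩
  simpa [← hξi] using hR (mem_iUnion.2 ⟨i, mem_image_of_mem _ ht⟩)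

theorem Setting.IE_const_eq (S : Setting T c N) {ξ : E3} (hΛ : MemLambda T S.r (fun _ => ξ)) :
    IE T c S.r S.V S.A (fun _ => ξ) = phiVal T S.V S.A (fun _ => ξ) := by
  rw [IE, psiE_const, phiE, if_pos hΛ, zero_add]

theorem Setting.eventually_memLambda_const (S : Setting T c N) {ξ : ℕ → E3}
    (hξ : Tendsto (fun n => ‖ξ n‖) atTop atTop) :
    ∀ᶠ n in atTop, MemLambda T S.r (fun _ => ξ n) := by
  obtain ⟨R, hR⟩ := S.exists_mem_Omega_of_lt_norm
  exact (hξ.eventually_gt_atTop R).mono fun n hn => ⟨memX_const _, hR _ hn⟩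

theorem Setting.tendsto_phiVal_const (S : Setting T c N) (hAV2 : CondAV2 S) {ξ : ℕ → E3}
    (hξ : Tendsto (fun n => ‖ξ n‖) atTop atTop) :
    Tendsto (fun n => phiVal T S.V S.A (fun _ => ξ n)) atTop (𝓝 0) := by
  have hΩ : ∀ᶠ n in atTop, ∀ t ∈ [[0, T]], (t, ξ n) ∈ Omega N S.r := by
    filter_upwards [S.eventually_memLambda_const hξ] with n hn
    rw [uIcc_of_le S.hT.le]; exact hn.2
  have hunif : TendstoUniformlyOn (fun n t => -S.V t (ξ n)) 0 atTop [[0, T]] := by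
    refine Metric.tendstoUniformlyOn_iff.2 fun ε hε => ?_
    obtain ⟨R, hR⟩ := hAV2 ε hε
    filter_upwards [hΩ, hξ.eventually_gt_atTop R] with n hnΩ hn t ht
    have hsmall := hR _ (hnΩ t ht) hn
    simp only at hsmall
    rw [Pi.zero_apply, dist_zero_left, norm_neg, Real.norm_eq_abs]
    linarith [norm_nonneg (gradient (S.V t) (ξ n) + deriv (fun s => S.A s (ξ n)) t),
      norm_nonneg (curl (S.A t) (ξ n))]
  have hcont : ∀ᶠ n in atTop, ContinuousOn (fun t => -S.V t (ξ n)) [[0, T]] :=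
    hΩ.mono fun n hn => (S.continuousOn_V continuous_const hn).neg
  simpa [phiVal, dot_eq_inner] using hunif.tendsto_intervalIntegral_of_continuousOn hcont

theorem Setting.tendsto_IE_const (S : Setting T c N) (hAV2 : CondAV2 S) {ξ : ℕ → E3}
    (hξ : Tendsto (fun n => ‖ξ n‖) atTop atTop) :
    Tendsto (fun n => IE T c S.r S.V S.A (fun _ => ξ n)) atTop (𝓝 0) :=
  (EReal.tendsto_coe.2 (S.tendsto_phiVal_const hAV2 hξ)).congr'
    ((S.eventually_memLambda_const hξ).mono fun _ hn => (S.IE_const_eq hn).symm)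

end LFE

/-- **Lemma (infimum of the action).** Under (V < 0 on Ω), (AV1) and (AV2):
`inf_X I = 0`, `I > 0` on `X`, and along constant paths `xₙ ≡ ξₙ` with `|ξₙ| → ∞` one has
(eventually) `I(xₙ) = Φ(xₙ)` and `I(xₙ) → 0`. -/
theorem inf_action_is_zero
    {T c : ℝ} {N : ℕ} (S : LFE.Setting T c N)
    (hV : ∀ p ∈ LFE.Omega N S.r, S.V p.1 p.2 < 0)
    (hAV1 : LFE.CondAV1 S) (hAV2 : LFE.CondAV2 S) :
    (⨅ x : {x : ℝ → LFE.E3 // LFE.MemX T x}, LFE.IE T c S.r S.V S.A x.1) = (0 : EReal) ∧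
    (∀ x : ℝ → LFE.E3, LFE.MemX T x → (0 : EReal) < LFE.IE T c S.r S.V S.A x) ∧
    ∀ ξ : ℕ → LFE.E3, Filter.Tendsto (fun n => ‖ξ n‖) Filter.atTop Filter.atTop →
      (∀ᶠ n in Filter.atTop,
        LFE.MemLambda T S.r (fun _ => ξ n) ∧
        LFE.IE T c S.r S.V S.A (fun _ => ξ n)
          = ((LFE.phiVal T S.V S.A (fun _ => ξ n) : ℝ) : EReal)) ∧
      Filter.Tendsto (fun n => LFE.IE T c S.r S.V S.A (fun _ => ξ n)) Filter.atTop
        (nhds (0 : EReal)) := by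
  refine ⟨le_antisymm ?_ (le_iInf fun x => (S.IE_pos hV hAV1 x).le),
    fun x _ => S.IE_pos hV hAV1 x, fun ξ hξ => ⟨?_, S.tendsto_IE_const hAV2 hξ⟩⟩
  · obtain ⟨e, he⟩ := exists_norm_eq LFE.E3 zero_le_one
    have hξ : Tendsto (fun n : ℕ => ‖(n : ℝ) • e‖) atTop atTop := by
      simpa [norm_smul, he] using tendsto_natCast_atTop_atTop (R := ℝ)
    exact ge_of_tendsto' (S.tendsto_IE_const hAV2 hξ)
      fun _ => iInf_le_of_le ⟨_, LFE.memX_const _⟩ le_rfl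
  · exact (S.eventually_memLambda_const hξ).mono fun n hn => ⟨hn, S.IE_const_eq hn⟩
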